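/- Let (e_0, e_1) be the standard basis of ℂ² and let ψ = ½ Σ_{a,b ∈ {0,1}} e_a ⊗ e_b ⊗ e_b ⊗ e_a, a unit vector in (ℂ²)^{⊗4}. Then the reduced density matrix of |ψ⟩⟨ψ| on the tensor factors (1,2) equals ¼ I₄ and has von Neumann entropy log 4, while the reduced density matrix on the factors (1,4) is the rank-one projection onto the unit vector (1/√2)(e_0 ⊗ e_0 + e_1 ⊗ e_1) and has entropy 0. -/

import Mathlib

open scoped BigOperators ComplexOrder

/-- Von Neumann entropy of a (Hermitian) matrix: `-∑ λᵢ log λᵢ` over the eigenvalues,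
with the convention that it is `0` for non-Hermitian matrices. -/
noncomputable def vNEntropy {n : Type*} [Fintype n] [DecidableEq n] (ρ : Matrix n n ℂ) : ℝ :=
  if h : ρ.IsHermitian then -∑ i, h.eigenvalues i * Real.log (h.eigenvalues i) else 0

/-- A density matrix: positive semidefinite with trace 1. -/
noncomputable def IsDensityMatrix {n : Type*} [Fintype n] [DecidableEq n] (ρ : Matrix n n ℂ) : Prop :=
  ρ.PosSemidef ∧ ρ.trace = 1

/-- The pure density matrix `|ψ⟩⟨ψ|` associated to a vector `ψ`. -/
noncomputable def pureState {n : Type*} (ψ : n → ℂ) : Matrix n n ℂ :=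
  Matrix.of fun p q => ψ p * star (ψ q)

variable {d₁ d₂ d₃ d₄ : ℕ}

/-- Reduced density matrix on factor 1 (partial trace over factors 2,3,4). -/
noncomputable def pt1 (ρ : Matrix (Fin d₁ × Fin d₂ × Fin d₃ × Fin d₄) (Fin d₁ × Fin d₂ × Fin d₃ × Fin d₄) ℂ) :
    Matrix (Fin d₁) (Fin d₁) ℂ :=
  Matrix.of fun i i' =>
    ∑ b : Fin d₂, ∑ c : Fin d₃, ∑ k : Fin d₄, ρ (i, b, c, k) (i', b, c, k)

/-- Reduced density matrix on factor 3 (partial trace over factors 1,2,4). -/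
noncomputable def pt3 (ρ : Matrix (Fin d₁ × Fin d₂ × Fin d₃ × Fin d₄) (Fin d₁ × Fin d₂ × Fin d₃ × Fin d₄) ℂ) :
    Matrix (Fin d₃) (Fin d₃) ℂ :=
  Matrix.of fun c c' =>
    ∑ i : Fin d₁, ∑ b : Fin d₂, ∑ k : Fin d₄, ρ (i, b, c, k) (i, b, c', k)

/-- Reduced density matrix on factor 4 (partial trace over factors 1,2,3). -/
noncomputable def pt4 (ρ : Matrix (Fin d₁ × Fin d₂ × Fin d₃ × Fin d₄) (Fin d₁ × Fin d₂ × Fin d₃ × Fin d₄) ℂ) :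
    Matrix (Fin d₄) (Fin d₄) ℂ :=
  Matrix.of fun k k' =>
    ∑ i : Fin d₁, ∑ b : Fin d₂, ∑ c : Fin d₃, ρ (i, b, c, k) (i, b, c, k')

/-- Reduced density matrix on factors (1,2) (partial trace over factors 3,4). -/
noncomputable def pt12 (ρ : Matrix (Fin d₁ × Fin d₂ × Fin d₃ × Fin d₄) (Fin d₁ × Fin d₂ × Fin d₃ × Fin d₄) ℂ) :
    Matrix (Fin d₁ × Fin d₂) (Fin d₁ × Fin d₂) ℂ :=
  Matrix.of fun p q =>
    ∑ c : Fin d₃, ∑ k : Fin d₄, ρ (p.1, p.2, c, k) (q.1, q.2, c, k)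

/-- Reduced density matrix on factors (1,4) (partial trace over factors 2,3). -/
noncomputable def pt14 (ρ : Matrix (Fin d₁ × Fin d₂ × Fin d₃ × Fin d₄) (Fin d₁ × Fin d₂ × Fin d₃ × Fin d₄) ℂ) :
    Matrix (Fin d₁ × Fin d₄) (Fin d₁ × Fin d₄) ℂ :=
  Matrix.of fun p q =>
    ∑ b : Fin d₂, ∑ c : Fin d₃, ρ (p.1, b, c, p.2) (q.1, b, c, q.2)

/-- Reduced density matrix on factors (3,4) (partial trace over factors 1,2). -/
noncomputable def pt34 (ρ : Matrix (Fin d₁ × Fin d₂ × Fin d₃ × Fin d₄) (Fin d₁ × Fin d₂ × Fin d₃ × Fin d₄) ℂ) :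
    Matrix (Fin d₃ × Fin d₄) (Fin d₃ × Fin d₄) ℂ :=
  Matrix.of fun p q =>
    ∑ i : Fin d₁, ∑ b : Fin d₂, ρ (i, b, p.1, p.2) (i, b, q.1, q.2)

/-- The standard basis vectors of `ℂ²`: `stdBasis a i = δ_{i a}`. -/
noncomputable def stdBasis (a : Fin 2) : Fin 2 → ℂ := fun i => if i = a then 1 else 0

/-- The vector `ψ = ½ ∑_{a,b} e_a ⊗ e_b ⊗ e_b ⊗ e_a` in `(ℂ²)^{⊗4}`. -/
noncomputable def ψDL : Fin 2 × Fin 2 × Fin 2 × Fin 2 → ℂ := fun p =>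
  (1 / 2 : ℂ) * ∑ a : Fin 2, ∑ b : Fin 2,
    stdBasis a p.1 * stdBasis b p.2.1 * stdBasis b p.2.2.1 * stdBasis a p.2.2.2

/-- The maximally entangled unit vector `(1/√2)(e₀ ⊗ e₀ + e₁ ⊗ e₁)` in `ℂ² ⊗ ℂ²`. -/
noncomputable def bellVec : Fin 2 × Fin 2 → ℂ := fun p =>
  (1 / (Real.sqrt 2 : ℝ) : ℂ) * (stdBasis 0 p.1 * stdBasis 0 p.2 + stdBasis 1 p.1 * stdBasis 1 p.2)

/-!
The (1,2) marginal is the scalar matrix `¼ I`, whose spectrum is `{¼}`, so its entropy is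
`-4 · ¼ log ¼ = log 4`. The (1,4) marginal is the pure state of the unit Bell vector; the pure
state of a unit vector is an idempotent Hermitian matrix, so its eigenvalues lie in `{0, 1}` and
every term `λ log λ` vanishes.
-/

namespace Matrix.IsHermitian

variable {m : Type*} [Fintype m] [DecidableEq m] {A : Matrix m m ℂ}

theorem eigenvalues_algebraMap (c : ℝ)
    (hA : (algebraMap ℝ (Matrix m m ℂ) c).IsHermitian) (i : m) : hA.eigenvalues i = c := by
  have : Nonempty m := ⟨i⟩
  simpa [spectrum.scalar_eq] using hA.eigenvalues_mem_spectrum_real i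

theorem eigenvalues_eq_zero_or_one (hA : A.IsHermitian) (hid : IsIdempotentElem A) (i : m) :
    hA.eigenvalues i = 0 ∨ hA.eigenvalues i = 1 :=
  hid.spectrum_subset ℝ (hA.eigenvalues_mem_spectrum_real i)

end Matrix.IsHermitian

section Entropy

variable {m : Type*} [Fintype m] [DecidableEq m]

theorem vNEntropy_eq_zero_of_isIdempotentElem {A : Matrix m m ℂ} (hA : A.IsHermitian)
    (hid : IsIdempotentElem A) : vNEntropy A = 0 := by
  rw [vNEntropy, dif_pos hA, neg_eq_zero]
  refine Finset.sum_eq_zero fun i _ => ?_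
  rcases hA.eigenvalues_eq_zero_or_one hid i with h | h <;> simp [h]

theorem vNEntropy_algebraMap (c : ℝ) :
    vNEntropy (algebraMap ℝ (Matrix m m ℂ) c) = -(Fintype.card m * (c * Real.log c)) := by
  have hA : (algebraMap ℝ (Matrix m m ℂ) c).IsHermitian := IsSelfAdjoint.algebraMap _ (.all c)
  simp [vNEntropy, hA, hA.eigenvalues_algebraMap]

theorem vNEntropy_maximallyMixed [Nonempty m] :
    vNEntropy ((Fintype.card m : ℂ)⁻¹ • (1 : Matrix m m ℂ)) = Real.log (Fintype.card m) := by
  have hn : (Fintype.card m : ℝ) ≠ 0 := Nat.cast_ne_zero.mpr Fintype.card_ne_zero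
  have : (Fintype.card m : ℂ)⁻¹ • (1 : Matrix m m ℂ) =
      algebraMap ℝ (Matrix m m ℂ) (Fintype.card m : ℝ)⁻¹ := by
    rw [Algebra.algebraMap_eq_smul_one, ← Complex.coe_smul]; push_cast; rfl
  rw [this, vNEntropy_algebraMap, Real.log_inv]
  field_simp

end Entropy

section PureState

variable {m : Type*}

theorem pureState_isHermitian (ψ : m → ℂ) : (pureState ψ).IsHermitian := by
  ext p q
  simp [pureState, mul_comm]

theorem pureState_isIdempotentElem [Fintype m] {ψ : m → ℂ} (hψ : ∑ p, ‖ψ p‖ ^ 2 = 1) :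
    IsIdempotentElem (pureState ψ) := by
  have hψ' : ∑ r, star (ψ r) * ψ r = 1 := by
    simp only [Complex.star_def, Complex.conj_mul']
    exact_mod_cast congrArg Complex.ofReal hψ
  ext p q
  calc ∑ r, ψ p * star (ψ r) * (ψ r * star (ψ q))
      = ψ p * (∑ r, star (ψ r) * ψ r) * star (ψ q) := by
        rw [Finset.mul_sum, Finset.sum_mul]; exact Finset.sum_congr rfl fun _ _ => by ring
    _ = ψ p * star (ψ q) := by rw [hψ', mul_one]

theorem vNEntropy_pureState [Fintype m] [DecidableEq m] {ψ : m → ℂ} (hψ : ∑ p, ‖ψ p‖ ^ 2 = 1) :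
    vNEntropy (pureState ψ) = 0 :=
  vNEntropy_eq_zero_of_isIdempotentElem (pureState_isHermitian ψ) (pureState_isIdempotentElem hψ)

end PureState

theorem ψDL_apply (a b c d : Fin 2) :
    ψDL (a, b, c, d) = if a = d ∧ b = c then 1 / 2 else 0 := by
  simp only [ψDL, stdBasis, Fin.sum_univ_two]
  fin_cases a <;> fin_cases b <;> fin_cases c <;> fin_cases d <;> norm_num

theorem star_ψDL (p : Fin 2 × Fin 2 × Fin 2 × Fin 2) : star (ψDL p) = ψDL p := by
  obtain ⟨a, b, c, d⟩ := p
  rw [ψDL_apply]; split_ifs <;> simp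

theorem bellVec_apply (i k : Fin 2) :
    bellVec (i, k) = if i = k then ((Real.sqrt 2 : ℝ) : ℂ)⁻¹ else 0 := by
  fin_cases i <;> fin_cases k <;> simp [bellVec, stdBasis]

theorem pt12_pureState_ψDL :
    pt12 (pureState ψDL) = (1 / 4 : ℂ) • (1 : Matrix (Fin 2 × Fin 2) (Fin 2 × Fin 2) ℂ) := by
  ext ⟨i, b⟩ ⟨i', b'⟩
  simp [pt12, pureState, star_ψDL, ψDL_apply, Matrix.one_apply, ite_and]
  norm_num

theorem pt14_pureState_ψDL : pt14 (pureState ψDL) = pureState bellVec := by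
  ext ⟨i, k⟩ ⟨i', k'⟩
  by_cases hik : i = k <;> by_cases hik' : i' = k' <;>
    simp [pt14, pureState, star_ψDL, ψDL_apply, bellVec_apply, hik, hik', Fin.sum_univ_two]
  rw [← Complex.ofReal_inv, ← Complex.ofReal_mul, ← mul_inv (√2), Real.mul_self_sqrt zero_le_two]
  norm_num

theorem sum_norm_sq_ψDL : ∑ p, ‖ψDL p‖ ^ 2 = 1 := by
  simp [Fintype.sum_prod_type, Fin.sum_univ_two, ψDL_apply]
  norm_num

theorem sum_norm_sq_bellVec : ∑ p, ‖bellVec p‖ ^ 2 = 1 := by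
  simp [Fintype.sum_prod_type, Fin.sum_univ_two, bellVec_apply]
  norm_num

/-- For `ψ = ½ ∑_{a,b} e_a ⊗ e_b ⊗ e_b ⊗ e_a`, a unit vector in `(ℂ²)^{⊗4}`,
the reduced density matrix on factors (1,2) is `¼·I₄`, with entropy `log 4`, while the reduced
density matrix on factors (1,4) is the rank-one projection onto `(1/√2)(e₀⊗e₀ + e₁⊗e₁)`,
with entropy `0`. -/
theorem doplicher_longo_counterexample_maximal :
    (∑ p, ‖ψDL p‖ ^ 2 = 1) ∧
    pt12 (pureState ψDL) = (1 / 4 : ℂ) • (1 : Matrix (Fin 2 × Fin 2) (Fin 2 × Fin 2) ℂ) ∧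
    vNEntropy (pt12 (pureState ψDL)) = Real.log 4 ∧
    pt14 (pureState ψDL) = pureState bellVec ∧
    vNEntropy (pt14 (pureState ψDL)) = 0 := by
  refine ⟨sum_norm_sq_ψDL, pt12_pureState_ψDL, ?_, pt14_pureState_ψDL, ?_⟩
  · have h := vNEntropy_maximallyMixed (m := Fin 2 × Fin 2)
    norm_num at h
    rwa [pt12_pureState_ψDL]
  · rw [pt14_pureState_ψDL]
    exact vNEntropy_pureState sum_norm_sq_bellVec
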